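/- arXiv:1906.09764 — 2 statements merged into one kernel-verified Lean document; each statement's English description precedes it below -/
import Mathlib

section
/- Suppose P is a polynomial satisfying the hypergeometric-type ODE ρ·P'' + τ·P' + λ·P = 0, where ρ, τ are polynomials and λ, μ are constants with μ ≠ 0. Define the two-variable polynomial f(v,x) = μ·v·P(x) + ρ(x)·P'(x), and the planar vector field X given by v̇ = (λ/μ)·ρ(x) + (ρ'(x) − τ(x))·v + μ·v² and ẋ = ρ(x). Then X(f) = K·f where K(v,x) = ρ'(x) + μ·v − τ(x); i.e., f = 0 is an invariant algebraic curve of X with cofactor K. -/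
open Polynomial

/-- If `P` satisfies the hypergeometric-type ODE `ρP'' + τP' + λP = 0`, then
`f(v,x) = μ·v·P(x) + ρ(x)·P'(x)` satisfies `X(f) = K·f` for the vector field
`X = ((λ/μ)ρ + (ρ'−τ)v + μv²) ∂/∂v + ρ ∂/∂x`, with cofactor
`K(v,x) = ρ'(x) + μ·v − τ(x)`. -/
theorem invariant_curve_orthogonal_poly (ρ τ P : Polynomial ℂ) (lam μ : ℂ) (hμ : μ ≠ 0)
    (hode : ρ * P.derivative.derivative + τ * P.derivative + Polynomial.C lam * P = 0) :
    ∀ v x : ℂ,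
      (lam / μ * ρ.eval x + (ρ.derivative.eval x - τ.eval x) * v + μ * v ^ 2) *
          (μ * P.eval x)
        + ρ.eval x * (μ * v * P.derivative.eval x
            + ρ.derivative.eval x * P.derivative.eval x
            + ρ.eval x * P.derivative.derivative.eval x)
      = (ρ.derivative.eval x + μ * v - τ.eval x) *
          (μ * v * P.eval x + ρ.eval x * P.derivative.eval x) := by
  intro v x
  have h := congrArg (Polynomial.eval x) hode
  simp only [eval_add, eval_mul, eval_C, eval_zero] at h
  linear_combination ρ.eval x * h + ρ.eval x * P.eval x * (div_mul_cancel₀ lam hμ)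
end

section
/- The foliation v' = λ/μ − (x/(1−x²))·v + (μ/(1−x²))·v² of the Chebyshev-associated quadratic system is mapped to the foliation w' = (−2 − 4λ + (4λ−1)x²)/(4(1−x²)²) − w² by the transformation w = −x/(2(1−x²)) − μv/(1−x²): if v(x) solves the first equation on an interval where x² ≠ 1, then w(x) := −x/(2(1−x²)) − μ·v(x)/(1−x²) solves the second. -/
/-! The substitution `w = -x/(2(1-x²)) - μv/(1-x²)` is an affine change of the dependent
variable, so it maps Riccati equations to Riccati equations; the factor `-μ/(1-x²)` normalises
the quadratic coefficient to `-1` and the shift `-x/(2(1-x²))` removes the linear term. The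
claim is then the quotient rule for `w` followed by substituting the equation for `v'`. -/

lemma one_sub_sq_ne_zero_of_mem_Ioo {x : ℝ} (hx : x ∈ Set.Ioo (-1) 1) : 1 - x ^ 2 ≠ 0 := by
  obtain ⟨hx₁, hx₂⟩ := hx
  nlinarith

lemma hasDerivAt_div_one_sub_sq {f : ℝ → ℝ} {f' x : ℝ} (hf : HasDerivAt f f' x)
    (hx : 1 - x ^ 2 ≠ 0) :
    HasDerivAt (fun u => f u / (1 - u ^ 2))
      ((f' * (1 - x ^ 2) + 2 * x * f x) / (1 - x ^ 2) ^ 2) x := by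
  refine (hf.fun_div ((hasDerivAt_pow 2 x).const_sub 1) hx).congr_deriv ?_
  push_cast
  ring

lemma hasDerivAt_chebyshev_substitution (μ : ℝ) {v : ℝ → ℝ} {v' x : ℝ}
    (hv : HasDerivAt v v' x) (hx : 1 - x ^ 2 ≠ 0) :
    HasDerivAt (fun u => -u / (2 * (1 - u ^ 2)) - μ * v u / (1 - u ^ 2))
      ((-(1 + x ^ 2) / 2 - μ * (v' * (1 - x ^ 2) + 2 * x * v x)) / (1 - x ^ 2) ^ 2) x := by
  have hshift : HasDerivAt (fun u => -u / 2) (-1 / 2) x := (hasDerivAt_neg x).div_const 2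
  have h := (hasDerivAt_div_one_sub_sq hshift hx).fun_sub
    (hasDerivAt_div_one_sub_sq (hv.const_mul μ) hx)
  simp only [div_div] at h
  exact h.congr_deriv (by ring)

/-- The foliation `v' = λ/μ − (x/(1−x²))v + (μ/(1−x²))v²` is mapped to
`w' = (−2 − 4λ + (4λ−1)x²)/(4(1−x²)²) − w²` by the transformation
`w = −x/(2(1−x²)) − μv/(1−x²)`. -/
theorem chebyshev_foliation_transform (lam μ : ℝ) (hμ : μ ≠ 0) (s : Set ℝ)
    (hs : s ⊆ Set.Ioo (-1) 1) (v : ℝ → ℝ)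
    (hv : ∀ x ∈ s, HasDerivAt v
      (lam / μ - x / (1 - x ^ 2) * v x + μ / (1 - x ^ 2) * (v x) ^ 2) x) :
    ∀ x ∈ s,
      HasDerivAt (fun u => -u / (2 * (1 - u ^ 2)) - μ * v u / (1 - u ^ 2))
        ((-2 - 4 * lam + (4 * lam - 1) * x ^ 2) / (4 * (1 - x ^ 2) ^ 2)
          - (-x / (2 * (1 - x ^ 2)) - μ * v x / (1 - x ^ 2)) ^ 2) x := by
  intro x hx
  have hx₀ := one_sub_sq_ne_zero_of_mem_Ioo (hs hx)
  convert hasDerivAt_chebyshev_substitution μ (hv x hx) hx₀ using 1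
  field_simp
  ring
end
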